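/- (Fay three-section formula) For all u₁, u₂, z₁, z₂ ∈ ℂ such that θ is nonzero at each of u₁, u₂, u₁+u₂, z₁, z₂ and z₁−z₂, one has φ(u₁,z₁)·φ(u₂,z₂) = φ(u₁+u₂, z₁)·φ(u₂, z₂−z₁) + φ(u₁+u₂, z₂)·φ(u₁, z₁−z₂). -/

import Mathlib

/-!
Multiplying `theta` by `cexp (π i z)` gives a genuinely odd theta function `ϑ₁` with the same
Kronecker function `phi`. Splitting the double series of `ϑ₁(s + t) ϑ₁(s - t)` according to the
parity of the sum of the two summation indices writes this product as a 2×2 minor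
`a(s) b(t) - b(s) a(t)`, where `a`, `b` are theta functions of modulus `2τ`. Cleared of
denominators, Fay's identity is a three-term relation between products `ϑ₁(x) ϑ₁(y)`, and for
2×2 minors it is the Plücker relation.
-/

open Complex

noncomputable section

/-- The odd Jacobi theta function
`θ(z) = q^{1/8} · Σ_{n ∈ ℤ} (−1)^n exp(2πi( n(n+1)τ/2 + n z ))`, `q = exp(2πiτ)`. -/
def theta (τ z : ℂ) : ℂ :=
  Complex.exp (2 * (Real.pi : ℂ) * I * τ / 8) *
    ∑' n : ℤ, (-1 : ℂ) ^ n *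
      Complex.exp (2 * (Real.pi : ℂ) * I * ((n : ℂ) * ((n : ℂ) + 1) * τ / 2 + (n : ℂ) * z))

/-- The derivative `θ'` of `θ` in `z`. -/
def theta' (τ : ℂ) : ℂ → ℂ := deriv (theta τ)

/-- `E₁(z) = θ'(z)/θ(z)`. -/
def E₁ (τ z : ℂ) : ℂ := theta' τ z / theta τ z

/-- `E₂(z) = −E₁'(z)`. -/
def E₂ (τ z : ℂ) : ℂ := - deriv (fun w => E₁ τ w) z

/-- The Kronecker function `φ(u,z) = θ(u+z)·θ'(0)/(θ(u)·θ(z))`. -/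
def phi (τ u z : ℂ) : ℂ := theta τ (u + z) * theta' τ 0 / (theta τ u * theta τ z)

open Real

def Int.parityEquiv : (ℤ × ℤ) ⊕ (ℤ × ℤ) ≃ ℤ × ℤ where
  toFun := Sum.elim (fun p => (p.1 + p.2, p.1 - p.2)) (fun p => (p.1 + p.2 + 1, p.1 - p.2))
  invFun q := if (q.1 + q.2) % 2 = 0 then .inl ((q.1 + q.2) / 2, (q.1 - q.2) / 2)
    else .inr ((q.1 + q.2 - 1) / 2, (q.1 - q.2 - 1) / 2)
  left_inv := by
    rintro (⟨j, k⟩ | ⟨j, k⟩) <;> dsimp only [Sum.elim_inl, Sum.elim_inr] <;> split_ifs <;>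
      first | (exfalso; omega) | (simp only [Sum.inl.injEq, Sum.inr.injEq, Prod.mk.injEq]; omega)
  right_inv := by
    rintro ⟨m, n⟩
    dsimp only
    split_ifs <;> simp only [Sum.elim_inl, Sum.elim_inr, Prod.mk.injEq] <;> omega

lemma jacobiTheta₂_term_add_mul_sub (j k : ℤ) (x y τ : ℂ) :
    jacobiTheta₂_term (j + k) (x + y) τ * jacobiTheta₂_term (j - k) (x - y) τ =
      jacobiTheta₂_term j (2 * x) (2 * τ) * jacobiTheta₂_term k (2 * y) (2 * τ) := by
  simp only [jacobiTheta₂_term, ← Complex.exp_add]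
  congr 1
  push_cast
  ring

lemma jacobiTheta₂_term_add_one_mul_sub (j k : ℤ) (x y τ : ℂ) :
    jacobiTheta₂_term (j + k + 1) (x + y) τ * jacobiTheta₂_term (j - k) (x - y) τ =
      cexp (π * I * (2 * (x + y) + τ)) *
        (jacobiTheta₂_term j (2 * x + τ) (2 * τ) * jacobiTheta₂_term k (2 * y + τ) (2 * τ)) := by
  simp only [jacobiTheta₂_term, ← Complex.exp_add]
  congr 1
  push_cast
  ring

lemma summable_norm_jacobiTheta₂_term (z : ℂ) {τ : ℂ} (hτ : 0 < τ.im) :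
    Summable (fun n : ℤ => ‖jacobiTheta₂_term n z τ‖) :=
  summable_norm_iff.mpr ((summable_jacobiTheta₂_term_iff z τ).mpr hτ)

lemma hasSum_jacobiTheta₂_term_mul (z w : ℂ) {τ : ℂ} (hτ : 0 < τ.im) :
    HasSum (fun p : ℤ × ℤ => jacobiTheta₂_term p.1 z τ * jacobiTheta₂_term p.2 w τ)
      (jacobiTheta₂ z τ * jacobiTheta₂ w τ) := by
  have hz := summable_norm_jacobiTheta₂_term z hτ
  have hw := summable_norm_jacobiTheta₂_term w hτ
  rw [jacobiTheta₂, jacobiTheta₂, tsum_mul_tsum_of_summable_norm hz hw]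
  exact (summable_mul_of_summable_norm hz hw).hasSum

theorem jacobiTheta₂_add_mul_jacobiTheta₂_sub (x y : ℂ) {τ : ℂ} (hτ : 0 < τ.im) :
    jacobiTheta₂ (x + y) τ * jacobiTheta₂ (x - y) τ =
      jacobiTheta₂ (2 * x) (2 * τ) * jacobiTheta₂ (2 * y) (2 * τ) +
        cexp (π * I * (2 * (x + y) + τ)) *
          (jacobiTheta₂ (2 * x + τ) (2 * τ) * jacobiTheta₂ (2 * y + τ) (2 * τ)) := by
  have h2τ : 0 < (2 * τ).im := by simpa using hτ
  have hEven := hasSum_jacobiTheta₂_term_mul (2 * x) (2 * y) h2τ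
  have hOdd := (hasSum_jacobiTheta₂_term_mul (2 * x + τ) (2 * y + τ) h2τ).mul_left
    (cexp (π * I * (2 * (x + y) + τ)))
  refine (hasSum_jacobiTheta₂_term_mul (x + y) (x - y) hτ).unique ?_
  rw [← Int.parityEquiv.hasSum_iff]
  exact HasSum.sum (hEven.congr_fun fun p => jacobiTheta₂_term_add_mul_sub p.1 p.2 x y τ)
    (hOdd.congr_fun fun p => jacobiTheta₂_term_add_one_mul_sub p.1 p.2 x y τ)

lemma theta_eq_jacobiTheta₂ (τ z : ℂ) :
    theta τ z = cexp (π * I * τ / 4) * jacobiTheta₂ (z + (τ + 1) / 2) τ := by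
  rw [theta, jacobiTheta₂]
  congr 1
  · congr 1; ring
  · refine tsum_congr fun n => ?_
    rw [jacobiTheta₂_term, ← exp_pi_mul_I, ← exp_int_mul, ← Complex.exp_add]
    congr 1
    ring

/-- `theta` is odd only up to an exponential factor: `theta τ (-z) = -cexp (2πiz) * theta τ z`. -/
def oddTheta (τ z : ℂ) : ℂ := cexp (π * I * z) * theta τ z

lemma oddTheta_ne_zero {τ z : ℂ} (h : theta τ z ≠ 0) : oddTheta τ z ≠ 0 :=
  mul_ne_zero (Complex.exp_ne_zero _) h

lemma oddTheta_eq_jacobiTheta₂ (τ z : ℂ) :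
    oddTheta τ z = cexp (π * I * (z + τ / 4)) * jacobiTheta₂ (z + (τ + 1) / 2) τ := by
  rw [oddTheta, theta_eq_jacobiTheta₂, ← mul_assoc, ← Complex.exp_add]
  congr 2
  ring

lemma oddTheta_neg (τ z : ℂ) : oddTheta τ (-z) = -oddTheta τ z := by
  have hshift := jacobiTheta₂_add_left' (z - (τ + 1) / 2 + 1) τ
  rw [jacobiTheta₂_add_left, show z - (τ + 1) / 2 + 1 + τ = z + (τ + 1) / 2 by ring] at hshift
  rw [oddTheta_eq_jacobiTheta₂, oddTheta_eq_jacobiTheta₂, hshift,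
    show -z + (τ + 1) / 2 = -(z - (τ + 1) / 2) by ring, jacobiTheta₂_neg_left, ← mul_assoc,
    ← Complex.exp_add, show π * I * (-z + τ / 4) = π * I * (z + τ / 4) +
      -π * I * (τ + 2 * (z - (τ + 1) / 2 + 1)) + π * I by ring, Complex.exp_add _ (π * I),
    exp_pi_mul_I]
  ring

theorem oddTheta_add_mul_oddTheta_sub {τ : ℂ} (hτ : 0 < τ.im) (s t : ℂ) :
    oddTheta τ (s + t) * oddTheta τ (s - t) =
      cexp (π * I * τ / 2) *
        (cexp (2 * π * I * s) * jacobiTheta₂ (2 * s + τ) (2 * τ) * jacobiTheta₂ (2 * t) (2 * τ) -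
          jacobiTheta₂ (2 * s) (2 * τ) *
            (cexp (2 * π * I * t) * jacobiTheta₂ (2 * t + τ) (2 * τ))) := by
  have hdouble := jacobiTheta₂_add_mul_jacobiTheta₂_sub (s + (τ + 1) / 2) t hτ
  have hshift := jacobiTheta₂_add_left' (2 * s + 1) (2 * τ)
  rw [jacobiTheta₂_add_left] at hshift
  rw [show 2 * (s + (τ + 1) / 2) = 2 * s + τ + 1 by ring, jacobiTheta₂_add_left,
    show 2 * s + τ + 1 + τ = 2 * s + 1 + 2 * τ by ring, hshift] at hdouble
  rw [oddTheta_eq_jacobiTheta₂, oddTheta_eq_jacobiTheta₂,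
    show s + t + (τ + 1) / 2 = s + (τ + 1) / 2 + t by ring,
    show s - t + (τ + 1) / 2 = s + (τ + 1) / 2 - t by ring,
    mul_mul_mul_comm, hdouble]
  have hfirst : cexp (π * I * (s + t + τ / 4)) * cexp (π * I * (s - t + τ / 4)) =
      cexp (π * I * τ / 2) * cexp (2 * π * I * s) := by
    simp only [← Complex.exp_add]; ring_nf
  have hsecond : cexp (π * I * (s + t + τ / 4)) * cexp (π * I * (s - t + τ / 4)) *
      (cexp (π * I * (2 * (s + (τ + 1) / 2 + t) + τ)) *
        cexp (-π * I * (2 * τ + 2 * (2 * s + 1)))) =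
      cexp (-(π * I)) * (cexp (π * I * τ / 2) * cexp (2 * π * I * t)) := by
    simp only [← Complex.exp_add]; ring_nf
  rw [exp_neg_pi_mul_I] at hsecond
  linear_combination (jacobiTheta₂ (2 * s + τ) (2 * τ) * jacobiTheta₂ (2 * t) (2 * τ)) * hfirst +
    (jacobiTheta₂ (2 * s) (2 * τ) * jacobiTheta₂ (2 * t + τ) (2 * τ)) * hsecond

theorem oddTheta_three_term {τ : ℂ} (hτ : 0 < τ.im) (u₁ u₂ z₁ z₂ : ℂ) :
    oddTheta τ (u₁ + z₁) * oddTheta τ (u₂ + z₂) * (oddTheta τ (u₁ + u₂) * oddTheta τ (z₁ - z₂)) =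
      oddTheta τ (u₁ + u₂ + z₂) * oddTheta τ z₁ * (oddTheta τ (u₁ + (z₁ - z₂)) * oddTheta τ u₂) -
        oddTheta τ (u₁ + u₂ + z₁) * oddTheta τ z₂ *
          (oddTheta τ u₁ * oddTheta τ (u₂ + (z₂ - z₁))) := by
  obtain ⟨a, b, hab⟩ : ∃ a b : ℂ → ℂ, ∀ s t,
      oddTheta τ (s + t) * oddTheta τ (s - t) = cexp (π * I * τ / 2) * (a s * b t - b s * a t) :=
    ⟨_, _, oddTheta_add_mul_oddTheta_sub hτ⟩
  have hprod : ∀ x y, oddTheta τ x * oddTheta τ y = cexp (π * I * τ / 2) *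
      (a ((x + y) / 2) * b ((x - y) / 2) - b ((x + y) / 2) * a ((x - y) / 2)) := by
    intro x y
    rw [← hab]
    congr 2 <;> ring
  -- the six products are 2×2 minors of one matrix with rows `a`, `b`: a Plücker relation
  simp only [hprod]
  ring_nf

lemma phi_eq_oddTheta (τ u z : ℂ) :
    phi τ u z = oddTheta τ (u + z) * theta' τ 0 / (oddTheta τ u * oddTheta τ z) := by
  simp only [phi, oddTheta, mul_add, Complex.exp_add]
  field_simp

/-- Fay three-section formula:
`φ(u₁,z₁)·φ(u₂,z₂) = φ(u₁+u₂, z₁)·φ(u₂, z₂−z₁) + φ(u₁+u₂, z₂)·φ(u₁, z₁−z₂)`. -/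
theorem fay_trisecant (τ : ℂ) (hτ : 0 < τ.im) (u₁ u₂ z₁ z₂ : ℂ)
    (hu₁ : theta τ u₁ ≠ 0) (hu₂ : theta τ u₂ ≠ 0) (hu₁₂ : theta τ (u₁ + u₂) ≠ 0)
    (hz₁ : theta τ z₁ ≠ 0) (hz₂ : theta τ z₂ ≠ 0) (hz₁₂ : theta τ (z₁ - z₂) ≠ 0) :
    phi τ u₁ z₁ * phi τ u₂ z₂ =
      phi τ (u₁ + u₂) z₁ * phi τ u₂ (z₂ - z₁) + phi τ (u₁ + u₂) z₂ * phi τ u₁ (z₁ - z₂) := by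
  simp only [phi_eq_oddTheta]
  rw [show oddTheta τ (z₂ - z₁) = -oddTheta τ (z₁ - z₂) by rw [← oddTheta_neg, neg_sub]]
  field_simp [oddTheta_ne_zero hu₁, oddTheta_ne_zero hu₂, oddTheta_ne_zero hu₁₂,
    oddTheta_ne_zero hz₁, oddTheta_ne_zero hz₂, oddTheta_ne_zero hz₁₂]
  linear_combination theta' τ 0 ^ 2 * oddTheta_three_term hτ u₁ u₂ z₁ z₂

end
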